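/- arXiv:1203.0709 — 7 statements merged into one kernel-verified Lean document; each statement's English description precedes it below -/
import Mathlib

section
/- If there exists a Golomb ruler of order k and length L, then for every integer v with v ≥ 2L + 1 there exists a circulant v×v {0,1}-matrix of weight k that is an incidence matrix of a symmetric configuration v_k (that is, a cyclic symmetric configuration v_k exists). -/
/-- A Golomb ruler: a finite set of integers whose differences over ordered pairs
of distinct elements are pairwise distinct. -/
def IsGolombRulerZ (A : Finset ℤ) : Prop :=
  ∀ a ∈ A, ∀ b ∈ A, ∀ c ∈ A, ∀ d ∈ A,
    a ≠ b → c ≠ d → a - b = c - d → a = c ∧ b = d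

/-- An incidence matrix of a symmetric configuration `v_k`: a 0,1-matrix
(values in `Bool`) with all row and column sums equal to `k` that is `J₂`-free. -/
def IsIncidenceMatrix (v k : ℕ) [NeZero v] (M : Matrix (ZMod v) (ZMod v) Bool) : Prop :=
  (∀ i, (Finset.univ.filter (fun j => M i j = true)).card = k) ∧
  (∀ j, (Finset.univ.filter (fun i => M i j = true)).card = k) ∧
  ∀ i i' j j', i ≠ i' → j ≠ j' →
    ¬(M i j = true ∧ M i j' = true ∧ M i' j = true ∧ M i' j' = true)

/-- If there exists a Golomb ruler of order `k` and length `L`, then for every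
`v ≥ 2L + 1` there exists a cyclic symmetric configuration `v_k`, i.e. a circulant
`v × v` 0,1-matrix of weight `k` that is an incidence matrix of a symmetric
configuration `v_k`. -/
theorem exists_cyclic_configuration_of_golomb_ruler (k : ℕ) (L : ℤ)
    (A : Finset ℤ) (hA : A.Nonempty) (hk : A.card = k) (hG : IsGolombRulerZ A)
    (hL : A.max' hA - A.min' hA = L)
    (v : ℕ) [NeZero v] (hv : (v : ℤ) ≥ 2 * L + 1) :
    ∃ M : Matrix (ZMod v) (ZMod v) Bool,
      (∀ i j c : ZMod v, M (i + c) (j + c) = M i j) ∧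
      IsIncidenceMatrix v k M := by
  have hL0 : 0 ≤ L := by
    have := A.min'_le _ (A.max'_mem hA)
    linarith [hL]
  -- key: integers of small absolute value that are 0 mod v are 0
  have hmod : ∀ x : ℤ, ((x : ZMod v) = 0) → |x| ≤ 2 * L → x = 0 := by
    intro x hx hb
    have hd : (v : ℤ) ∣ x := by
      rwa [ZMod.intCast_zmod_eq_zero_iff_dvd] at hx
    rcases hd with ⟨c, hc⟩
    rcases eq_or_ne c 0 with h | h
    · simp [hc, h]
    · exfalso
      have h1 : (1 : ℤ) ≤ |c| := Int.one_le_abs h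
      have hvle : (v : ℤ) ≤ |x| := by
        have : |x| = (v : ℤ) * |c| := by
          rw [hc, abs_mul, abs_of_nonneg (by positivity : (0:ℤ) ≤ (v:ℤ))]
        nlinarith
      linarith
  -- differences of elements of A are bounded by L
  have hbound : ∀ a ∈ A, ∀ b ∈ A, |a - b| ≤ L := by
    intro a ha b hb
    rw [abs_sub_le_iff]
    constructor <;> [skip; skip] <;>
      · have h1 := A.le_max' a ha
        have h2 := A.min'_le b hb
        have h3 := A.le_max' b hb
        have h4 := A.min'_le a ha
        linarith
  -- the cast to ZMod v is injective on A
  have hinj : ∀ a ∈ A, ∀ b ∈ A, ((a : ZMod v) = (b : ZMod v)) → a = b := by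
    intro a ha b hb h
    have : ((a - b : ℤ) : ZMod v) = 0 := by push_cast; rw [h]; ring
    have := hmod _ this (le_trans (hbound a ha b hb) (by linarith))
    linarith [this]
  set S : Finset (ZMod v) := A.image (fun a : ℤ => (a : ZMod v)) with hS
  have hScard : S.card = k := by
    rw [hS, Finset.card_image_of_injOn (fun a ha b hb h => hinj a ha b hb h), hk]
  refine ⟨fun i j => decide ((j - i) ∈ S), ?_, ?_, ?_, ?_⟩
  · intro i j c; simp [add_sub_add_comm]
  · intro i
    have : (Finset.univ.filter (fun j => decide ((j - i) ∈ S) = true)) =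
        S.image (fun s => i + s) := by
      ext j
      simp only [Finset.mem_filter, Finset.mem_univ, true_and, decide_eq_true_eq,
        Finset.mem_image]
      constructor
      · intro h; exact ⟨j - i, h, by ring⟩
      · rintro ⟨s, hs, rfl⟩; simpa using hs
    rw [this, Finset.card_image_of_injective _ (add_right_injective i), hScard]
  · intro j
    have : (Finset.univ.filter (fun i => decide ((j - i) ∈ S) = true)) =
        S.image (fun s => j - s) := by
      ext i
      simp only [Finset.mem_filter, Finset.mem_univ, true_and, decide_eq_true_eq,
        Finset.mem_image]
      constructor
      · intro h; exact ⟨j - i, h, by ring⟩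
      · rintro ⟨s, hs, rfl⟩; simpa using hs
    rw [this, Finset.card_image_of_injective _ (sub_right_injective), hScard]
  · intro i i' j j' hii hjj ⟨h1, h2, h3, h4⟩
    simp only [decide_eq_true_eq, hS, Finset.mem_image] at h1 h2 h3 h4
    obtain ⟨a, haA, ha⟩ := h1
    obtain ⟨b, hbA, hb⟩ := h2
    obtain ⟨c, hcA, hc⟩ := h3
    obtain ⟨d, hdA, hd⟩ := h4
    -- a - b ≡ c - d ≡ j - j' (mod v)
    have hab : ((a - b - (c - d) : ℤ) : ZMod v) = 0 := by
      push_cast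
      rw [ha, hb, hc, hd]
      ring
    have habs : |a - b - (c - d)| ≤ 2 * L := by
      have h5 := hbound a haA b hbA
      have h6 := hbound c hcA d hdA
      have := abs_sub (a - b) (c - d)
      calc |a - b - (c - d)| ≤ |a - b| + |c - d| := abs_sub _ _
        _ ≤ 2 * L := by linarith
    have heq : a - b = c - d := by
      have := hmod _ hab habs
      linarith
    have hane : a ≠ b := by
      rintro rfl
      apply hjj
      exact sub_left_injective (ha.symm.trans hb)
    have hcne : c ≠ d := by
      rintro rfl
      apply hjj
      exact sub_left_injective (hc.symm.trans hd)
    obtain ⟨hac, hbd⟩ := hG a haA b hbA c hcA d hdA hane hcne heq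
    apply hii
    have : j - i = j - i' := by rw [← ha, hac, hc]
    exact (sub_right_injective this)
end

section
/- Let v = t·d and let A ⊆ {0,1,…,v−1} be a (v,k) modular Golomb ruler. For each h with 0 ≤ h ≤ t−1, the quotient set B_h = {(a−h)/t : a ∈ A, a ≡ h (mod t)} is a (d, w_h) modular Golomb ruler, where w_h = |B_h|; that is, the differences b − b' modulo d over ordered pairs of distinct elements b, b' of B_h are pairwise distinct and nonzero. -/
/-- A `(v,k)` modular Golomb ruler, given as a `k`-element set of integers in
`{0,…,v-1}` whose differences over ordered pairs of distinct elements are pairwise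
distinct and nonzero modulo `v`. -/
def IsModularGolombRulerNat (v k : ℕ) (A : Finset ℕ) : Prop :=
  A.card = k ∧ (∀ a ∈ A, a < v) ∧
  ∀ a ∈ A, ∀ b ∈ A, ∀ c ∈ A, ∀ d ∈ A, a ≠ b → c ≠ d →
    ((a : ZMod v) - (b : ZMod v) = (c : ZMod v) - (d : ZMod v)) → a = c ∧ b = d

/-- Quotient construction: if `A` is a `(v,k)` modular Golomb ruler with `v = t·d`,
then for each `0 ≤ h < t` the quotient set `B_h = {(a-h)/t : a ∈ A, a ≡ h (mod t)}`
is a `(d, w_h)` modular Golomb ruler, where `w_h = |B_h|`. -/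
theorem quotient_modular_golomb_ruler (v t d k : ℕ) (hv : v = t * d)
    (ht : 0 < t) (hd : 0 < d)
    (A : Finset ℕ) (hA : IsModularGolombRulerNat v k A)
    (h : ℕ) (hh : h < t) :
    IsModularGolombRulerNat d
      ((A.filter (fun a => a % t = h)).image (fun a => (a - h) / t)).card
      ((A.filter (fun a => a % t = h)).image (fun a => (a - h) / t)) := by
  obtain ⟨hcard, hlt, hdiff⟩ := hA
  have key : ∀ b ∈ (A.filter (fun a => a % t = h)).image (fun a => (a - h) / t),
      t * b + h ∈ A ∧ b < d := by
    intro b hb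
    simp only [Finset.mem_image, Finset.mem_filter] at hb
    obtain ⟨a, ⟨haA, hmod⟩, hba⟩ := hb
    have ha := hlt a haA
    have h2 := Nat.div_add_mod a t
    have h3 : (a - h) / t = a / t := by
      rw [show a - h = t * (a / t) by omega, Nat.mul_div_cancel_left _ ht]
    have hab : a = t * b + h := by subst hba; rw [h3]; omega
    have hbd : t * b < t * d := by omega
    exact ⟨hab ▸ haA, Nat.lt_of_mul_lt_mul_left hbd⟩
  refine ⟨rfl, fun b hb => (key b hb).2, ?_⟩
  intro b1 hb1 b2 hb2 b3 hb3 b4 hb4 hne12 hne34 heq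
  obtain ⟨ha1, _⟩ := key b1 hb1
  obtain ⟨ha2, _⟩ := key b2 hb2
  obtain ⟨ha3, _⟩ := key b3 hb3
  obtain ⟨ha4, _⟩ := key b4 hb4
  have H : ((b1 : ℤ) - b2) ≡ ((b3 : ℤ) - b4) [ZMOD (d : ℤ)] := by
    rw [← ZMod.intCast_eq_intCast_iff]
    push_cast
    exact heq
  have H2 := H.mul_left' (c := (t : ℤ))
  have H3 : ((t * b1 + h : ℕ) : ZMod v) - ((t * b2 + h : ℕ) : ZMod v)
      = ((t * b3 + h : ℕ) : ZMod v) - ((t * b4 + h : ℕ) : ZMod v) := by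
    have h4 : ((t * ((b1:ℤ) - b2) : ℤ) : ZMod v) = ((t * ((b3:ℤ) - b4) : ℤ) : ZMod v) := by
      rw [ZMod.intCast_eq_intCast_iff, hv]
      exact_mod_cast H2
    push_cast at h4 ⊢
    linear_combination h4
  have := hdiff _ ha1 _ ha2 _ ha3 _ ha4 (fun hc => hne12 (Nat.eq_of_mul_eq_mul_left ht (by omega)))
    (fun hc => hne34 (Nat.eq_of_mul_eq_mul_left ht (by omega))) H3
  exact ⟨Nat.eq_of_mul_eq_mul_left ht (by omega), Nat.eq_of_mul_eq_mul_left ht (by omega)⟩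
end

section
/- Let v = t·d, let A ⊆ {0,1,…,v−1} be a (v,k) modular Golomb ruler, and let σ_t be the permutation of {0,1,…,v−1} with σ_t(a·d+b) = b·t+a for 0 ≤ a ≤ t−1, 0 ≤ b ≤ d−1. Then for all 0 ≤ i, j ≤ d−1 and all 0 ≤ h ≤ t−1, the (i, h·d+j) entry of A_{σ_t} equals 1 if and only if (j − i) mod d ∈ B_h. In particular, the d×d block M_h of A_{σ_t} formed by rows 0,…,d−1 and columns h·d,…,h·d+d−1 is a circulant matrix of weight w_h whose first row corresponds to the (d, w_h) modular Golomb ruler B_h. -/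
/-- The permutation `σ_t` of `{0,…,v-1}` (with `v = t·d`) defined by
`σ_t(a·d + b) = b·t + a` for `0 ≤ a ≤ t-1`, `0 ≤ b ≤ d-1`; here `a = x / d`,
`b = x % d`. -/
def sigmaT (t d x : ℕ) : ℕ := x % d * t + x / d

/-- The quotient set `B_h = {(a-h)/t : a ∈ A, a ≡ h (mod t)}`. -/
def quotientSet (t h : ℕ) (A : Finset ℕ) : Finset ℕ :=
  (A.filter (fun a => a % t = h)).image (fun a => (a - h) / t)


lemma two_mod (d y : ℕ) (hd : 0 < d) (hy : y < 2 * d) :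
    y % d = if d ≤ y then y - d else y := by
  split
  · next hle =>
    rw [Nat.mod_eq_sub_mod hle, Nat.mod_eq_of_lt (by omega)]
  · next hlt => rw [Nat.mod_eq_of_lt (by omega)]

lemma mod_round (d m i : ℕ) (hd : 0 < d) (hm : m < d) (hi : i < d) :
    ((m + i) % d + d - i) % d = m := by
  have hjd : (m + i) % d < d := Nat.mod_lt _ hd
  have t1 := two_mod d (m + i) hd (by omega)
  have t2 := two_mod d ((m + i) % d + d - i) hd (by omega)
  split_ifs at t1 t2 <;> omega

lemma key (t d i j h : ℕ) (ht : 0 < t) (hi : i < d) (hj : j < d) (hh : h < t) :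
    (sigmaT t d (h * d + j) + t * d - sigmaT t d i) % (t * d)
      = (j + d - i) % d * t + h := by
  have h1 : sigmaT t d (h * d + j) = j * t + h := by
    unfold sigmaT
    rw [mul_comm h d, Nat.mul_add_mod, Nat.mod_eq_of_lt hj,
      Nat.mul_add_div (by omega), Nat.div_eq_of_lt hj]
    omega
  have h2 : sigmaT t d i = i * t := by
    unfold sigmaT
    rw [Nat.mod_eq_of_lt hi, Nat.div_eq_of_lt hi]
    omega
  rw [h1, h2]
  rcases le_or_gt i j with hij | hij
  · have hm : (j + d - i) % d = j - i := by
      have e : j + d - i = (j - i) + d := by omega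
      rw [e, Nat.add_mod_right, Nat.mod_eq_of_lt (by omega)]
    have e2 : j * t + h + t * d - i * t = (j - i) * t + h + t * d := by
      have e1 := Nat.sub_mul j i t
      have e2 : i * t ≤ j * t := Nat.mul_le_mul_right t hij
      omega
    have hlt : (j - i) * t + h < t * d := by
      have h3 : (j - i + 1) * t ≤ d * t := Nat.mul_le_mul_right t (by omega)
      have h4 : (j - i + 1) * t = (j - i) * t + t := by ring
      have h5 : t * d = d * t := mul_comm t d
      omega
    rw [hm, e2, Nat.add_mod_right, Nat.mod_eq_of_lt hlt]
  · have hm : (j + d - i) % d = j + d - i := Nat.mod_eq_of_lt (by omega)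
    have e2 : j * t + h + t * d - i * t = (j + d - i) * t + h := by
      have e3 : (j + d - i) * t + i * t = j * t + t * d := by
        rw [← Nat.add_mul]
        have : j + d - i + i = j + d := by omega
        rw [this]; ring
      have : i * t ≤ t * d := by
        rw [mul_comm]; exact Nat.mul_le_mul_left t (by omega)
      omega
    have hlt : (j + d - i) * t + h < t * d := by
      have h3 : (j + d - i + 1) * t ≤ d * t := Nat.mul_le_mul_right t (by omega)
      have h4 : (j + d - i + 1) * t = (j + d - i) * t + t := by ring
      have h5 : t * d = d * t := mul_comm t d
      omega
    rw [hm, e2, Nat.mod_eq_of_lt hlt]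

lemma mem_quot (t h m : ℕ) (ht : 0 < t) (hh : h < t) (A : Finset ℕ) :
    m * t + h ∈ A ↔ m ∈ quotientSet t h A := by
  simp only [quotientSet, Finset.mem_image, Finset.mem_filter]
  constructor
  · intro hmem
    exact ⟨m * t + h, ⟨hmem, by rw [mul_comm, Nat.mul_add_mod, Nat.mod_eq_of_lt hh]⟩,
      by rw [Nat.add_sub_cancel, Nat.mul_div_cancel m ht]⟩
  · rintro ⟨a, ⟨ha, hmod⟩, hq⟩
    have hdm := Nat.div_add_mod a t
    rw [hmod] at hdm
    have e : a - h = t * (a / t) := by omega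
    rw [e, Nat.mul_div_cancel_left _ ht] at hq
    rw [hq] at hdm
    have : m * t + h = a := by rw [mul_comm]; exact hdm
    rwa [this]

lemma quot_lt (t d h : ℕ) (ht : 0 < t) (A : Finset ℕ) (hA : ∀ a ∈ A, a < t * d) :
    ∀ m ∈ quotientSet t h A, m < d := by
  intro m hm
  simp only [quotientSet, Finset.mem_image, Finset.mem_filter] at hm
  obtain ⟨a, ⟨ha, _⟩, rfl⟩ := hm
  have : a - h ≤ a := Nat.sub_le a h
  have := hA a ha
  calc (a - h) / t ≤ a / t := Nat.div_le_div_right ‹a - h ≤ a›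
    _ < d := Nat.div_lt_of_lt_mul (by omega)

/-- In the matrix `A_{σ_t}` (whose `(i,j)` entry is `1` iff
`(σ_t(j) - σ_t(i)) mod v ∈ A`), for `0 ≤ i,j ≤ d-1` and `0 ≤ h ≤ t-1` the
`(i, h·d + j)` entry equals `1` iff `(j - i) mod d ∈ B_h`.  In particular the
`d × d` block `M_h` on rows `0,…,d-1` and columns `h·d,…,h·d+d-1` is circulant of
weight `w_h = |B_h|`, with first row corresponding to the `(d, w_h)` modular Golomb
ruler `B_h`. -/
theorem Asigma_block_Mh (v t d k : ℕ) (hv : v = t * d) (ht : 0 < t) (hd : 0 < d)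
    (A : Finset ℕ) (hA : IsModularGolombRulerNat v k A)
    (i j h : ℕ) (hi : i < d) (hj : j < d) (hh : h < t) :
    ((sigmaT t d (h * d + j) + v - sigmaT t d i) % v ∈ A ↔
      (j + d - i) % d ∈ quotientSet t h A) ∧
    ((Finset.range d).filter
      (fun j' => (sigmaT t d (h * d + j') + v - sigmaT t d i) % v ∈ A)).card =
      (quotientSet t h A).card := by
  have hbound : ∀ a ∈ A, a < t * d := fun a ha => hv ▸ hA.2.1 a ha
  have hiff : ∀ j', j' < d →
      ((sigmaT t d (h * d + j') + v - sigmaT t d i) % v ∈ A ↔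
        (j' + d - i) % d ∈ quotientSet t h A) := by
    intro j' hj'
    rw [hv, key t d i j' h ht hi hj' hh]
    exact mem_quot t h _ ht hh A
  refine ⟨hiff j hj, ?_⟩
  apply Finset.card_bij (fun j' _ => (j' + d - i) % d)
  · intro j' hj'
    rw [Finset.mem_filter, Finset.mem_range] at hj'
    exact (hiff j' hj'.1).mp hj'.2
  · intro j1 hj1 j2 hj2 he
    rw [Finset.mem_filter, Finset.mem_range] at hj1 hj2
    have t1 := two_mod d (j1 + d - i) hd (by omega)
    have t2 := two_mod d (j2 + d - i) hd (by omega)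
    split_ifs at t1 t2 <;> omega
  · intro m hm
    have hmd : m < d := quot_lt t d h ht A hbound m hm
    have hjd : (m + i) % d < d := Nat.mod_lt _ hd
    have key2 : ((m + i) % d + d - i) % d = m := mod_round d m i hd hmd hi
    refine ⟨(m + i) % d, ?_, key2⟩
    rw [Finset.mem_filter, Finset.mem_range]
    exact ⟨hjd, (hiff _ hjd).mpr (key2.symm ▸ hm)⟩
end

section
/- Let v = t·d, let A ⊆ {0,1,…,v−1} be a (v,k) modular Golomb ruler, and let σ_t be the permutation of {0,1,…,v−1} with σ_t(a·d+b) = b·t+a for 0 ≤ a ≤ t−1, 0 ≤ b ≤ d−1. Then for all 0 ≤ i, j ≤ d−1 and all 1 ≤ h ≤ t−1, the ((t−h)·d+i, j) entry of A_{σ_t} equals 1 if and only if (j − i − 1) mod d ∈ B_h. In particular, the d×d block T_h of A_{σ_t} formed by rows (t−h)d,…,(t−h)d+d−1 and columns 0,…,d−1 is a circulant matrix of weight w_h obtained from the block with first-row set B_h by a cyclic shift of each row to the right by one position. -/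
lemma mem_qs_iff (t h : ℕ) (hh : h < t) (A : Finset ℕ) (m : ℕ) :
    t * m + h ∈ A ↔ m ∈ quotientSet t h A := by
  have ht : 0 < t := by omega
  constructor
  · intro hm
    refine Finset.mem_image.2 ⟨t*m+h, Finset.mem_filter.2 ⟨hm, ?_⟩, ?_⟩
    · rw [Nat.mul_add_mod, Nat.mod_eq_of_lt hh]
    · rw [Nat.add_sub_cancel, Nat.mul_div_cancel_left _ ht]
  · intro hm
    obtain ⟨a, ha, hfa⟩ := Finset.mem_image.1 hm
    obtain ⟨haA, hamod⟩ := Finset.mem_filter.1 ha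
    have hdm := Nat.div_add_mod a t
    have ha' : a = t * (a/t) + h := by omega
    have : (a - h) / t = a / t := by
      rw [show a - h = t * (a/t) by omega, Nat.mul_div_cancel_left _ ht]
    have : a = t * m + h := by rw [ha', ← hfa, this]
    rwa [← this]

lemma entry_eq (v t d : ℕ) (hv : v = t*d) (i j h : ℕ)
    (hi : i < d) (hj : j < d) (hh1 : 1 ≤ h) (hh : h < t) :
    (sigmaT t d j + v - sigmaT t d ((t - h) * d + i)) % v
      = t * ((j + 2 * d - (i + 1)) % d) + h := by
  have hd : 0 < d := by omega
  have ht : 0 < t := by omega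
  have h1 : sigmaT t d j = j * t := by
    unfold sigmaT
    rw [Nat.mod_eq_of_lt hj, Nat.div_eq_of_lt hj]
    omega
  have h2 : sigmaT t d ((t - h) * d + i) = i * t + (t - h) := by
    unfold sigmaT
    rw [Nat.add_comm ((t-h)*d) i, Nat.add_mul_mod_self_right,
      Nat.add_mul_div_right _ _ hd, Nat.mod_eq_of_lt hi, Nat.div_eq_of_lt hi]
    omega
  rw [h1, h2, hv]
  obtain ⟨h', hh' : t = h + h', hh'0 : 0 < h'⟩ :
      ∃ h', t = h + h' ∧ 0 < h' := ⟨t - h, by omega, by omega⟩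
  have hth : t - h = h' := by omega
  by_cases hji : i + 1 ≤ j
  · obtain ⟨r, hr⟩ : ∃ r, j = i + 1 + r := ⟨j - (i+1), by omega⟩
    have hrd : r < d := by omega
    have hmod : (j + 2 * d - (i + 1)) % d = r := by
      rw [show j + 2*d - (i+1) = r + 2*d by omega, Nat.add_mul_mod_self_right,
        Nat.mod_eq_of_lt hrd]
    rw [hmod]
    have hj' : t * j = t * i + t + t * r := by rw [hr]; ring
    have hN : j * t + t * d - (i * t + (t - h)) = t * d + (t * r + h) := by
      rw [hth]
      have : j * t + t * d = (i * t + h') + (t * d + (t * r + h)) := by linarith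
      omega
    rw [hN, Nat.add_mod_left]
    have hlt : t * r + h < t * d := by
      have h3 : t * (r + 1) ≤ t * d := Nat.mul_le_mul_left _ (by omega)
      rw [Nat.mul_succ] at h3
      linarith
    exact Nat.mod_eq_of_lt hlt
  · obtain ⟨s, hs⟩ : ∃ s, j + d = i + 1 + s := ⟨j + d - (i+1), by omega⟩
    have hsd : s < d := by omega
    have hmod : (j + 2 * d - (i + 1)) % d = s := by
      rw [show j + 2*d - (i+1) = s + 1*d by omega, Nat.add_mul_mod_self_right,
        Nat.mod_eq_of_lt hsd]
    rw [hmod]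
    have hj' : t * j + t * d = t * i + t + t * s := by
      have : t * (j + d) = t * (i + 1 + s) := by rw [hs]
      linarith [this, Nat.mul_add t j d, Nat.mul_add t (i+1) s]
    have hN : j * t + t * d - (i * t + (t - h)) = t * s + h := by
      rw [hth]
      have : j * t + t * d = (i * t + h') + (t * s + h) := by linarith
      omega
    rw [hN]
    have hlt : t * s + h < t * d := by
      have h3 : t * (s + 1) ≤ t * d := Nat.mul_le_mul_left _ (by omega)
      rw [Nat.mul_succ] at h3
      linarith
    exact Nat.mod_eq_of_lt hlt


/-- In the matrix `A_{σ_t}` (whose `(i,j)` entry is `1` iff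
`(σ_t(j) - σ_t(i)) mod v ∈ A`), for `0 ≤ i,j ≤ d-1` and `1 ≤ h ≤ t-1` the
`((t-h)·d + i, j)` entry equals `1` iff `(j - i - 1) mod d ∈ B_h`.  In particular
the `d × d` block `T_h` on rows `(t-h)d,…,(t-h)d+d-1` and columns `0,…,d-1` is
circulant of weight `w_h = |B_h|`, obtained from the block with first-row set `B_h`
by a cyclic shift of each row to the right by one position. -/
theorem Asigma_block_Th (v t d k : ℕ) (hv : v = t * d) (ht : 0 < t) (hd : 0 < d)
    (A : Finset ℕ) (hA : IsModularGolombRulerNat v k A)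
    (i j h : ℕ) (hi : i < d) (hj : j < d) (hh1 : 1 ≤ h) (hh : h < t) :
    ((sigmaT t d j + v - sigmaT t d ((t - h) * d + i)) % v ∈ A ↔
      (j + 2 * d - (i + 1)) % d ∈ quotientSet t h A) ∧
    ((Finset.range d).filter
      (fun j' => (sigmaT t d j' + v - sigmaT t d ((t - h) * d + i)) % v ∈ A)).card =
      (quotientSet t h A).card := by
  have key : ∀ j', j' < d →
      ((sigmaT t d j' + v - sigmaT t d ((t - h) * d + i)) % v ∈ A ↔
        (j' + 2 * d - (i + 1)) % d ∈ quotientSet t h A) := by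
    intro j' hj'
    rw [entry_eq v t d hv i j' h hi hj' hh1 hh]
    exact mem_qs_iff t h hh A _
  have hBlt : ∀ m ∈ quotientSet t h A, m < d := by
    intro m hm
    obtain ⟨a, ha, hfa⟩ := Finset.mem_image.1 hm
    obtain ⟨haA, _⟩ := Finset.mem_filter.1 ha
    have hav : a < t * d := hv ▸ hA.2.1 a haA
    have h1 : (a - h) / t ≤ a / t := Nat.div_le_div_right (Nat.sub_le _ _)
    have h2 : a / t < d := Nat.div_lt_iff_lt_mul ht |>.2 (Nat.mul_comm t d ▸ hav)
    exact lt_of_le_of_lt (hfa ▸ h1) h2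
  -- the two inverse identities
  have fg : ∀ m, m < d → ((m + (i+1)) % d + 2 * d - (i + 1)) % d = m := by
    intro m hm
    rw [Nat.add_sub_assoc (by omega : i + 1 ≤ 2 * d), Nat.mod_add_mod,
      show m + (i+1) + (2*d - (i+1)) = m + 2 * d by omega,
      Nat.add_mul_mod_self_right, Nat.mod_eq_of_lt hm]
  have gf : ∀ j', j' < d → ((j' + 2 * d - (i + 1)) % d + (i + 1)) % d = j' := by
    intro j' hj'
    rw [Nat.mod_add_mod, show j' + 2*d - (i+1) + (i+1) = j' + 2 * d by omega,
      Nat.add_mul_mod_self_right, Nat.mod_eq_of_lt hj']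
  refine ⟨key j hj, ?_⟩
  refine Finset.card_bij' (fun j' _ => (j' + 2 * d - (i + 1)) % d)
    (fun m _ => (m + (i + 1)) % d) ?_ ?_ ?_ ?_
  · intro j' hj'
    obtain ⟨hj'd, hj'A⟩ := Finset.mem_filter.1 hj'
    exact (key j' (Finset.mem_range.1 hj'd)).1 hj'A
  · intro m hm
    have hmd := hBlt m hm
    have hlt : (m + (i + 1)) % d < d := Nat.mod_lt _ hd
    refine Finset.mem_filter.2 ⟨Finset.mem_range.2 hlt, ?_⟩
    rw [key _ hlt, fg m hmd]
    exact hm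
  · intro j' hj'
    exact gf j' (Finset.mem_range.1 (Finset.mem_filter.1 hj').1)
  · intro m hm
    exact fg m (hBlt m hm)
end

section
/- Let r be an odd prime power, let q = r², let F_q be the finite field with q elements, and let θ ∈ F_q be a non-square. Then for y ∈ F_q, the element 1 + θ·y² lies in the set {α ∈ F_q : α^r = α, α ≠ 0} of nonzero elements of the subfield of order r if and only if y = 0. (Geometrically: the line x = 1 in AG(2,q) meets the union of the conics x² + θy² = α, α ∈ F_r^*, in exactly one point, so that w₀ = 1.) -/
/-!
If `y ≠ 0` and `a = θ y²` satisfies `(1 + a)^r = 1 + a`, then `a^r = a` because `x ↦ x^r` is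
additive in characteristic `p`. So `a` is a nonzero element of the subfield of order `r`, hence
`a^(r-1) = 1`. Since `(q - 1)/2 = (r - 1)(r + 1)/2` is a multiple of `r - 1`, Euler's criterion
makes `a` a square in `F`, and then so is `θ = a / y²`.
-/

namespace FiniteField

variable {F : Type*} [Field F] [Fintype F]

theorem isSquare_of_pow_eq_self {r : ℕ} (hr : Odd r) (hF : Fintype.card F = r ^ 2) {a : F}
    (ha : a ≠ 0) (har : a ^ r = a) : IsSquare a := by
  obtain ⟨j, rfl⟩ := hr
  have hchar : ringChar F ≠ 2 := fun h => by
    have hcard := even_card_iff_char_two.mp h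
    rw [hF, Nat.odd_iff.mp (odd_two_mul_add_one j).pow] at hcard
    exact one_ne_zero hcard
  have hunit : a ^ (2 * j) = 1 := by
    rw [pow_succ] at har
    exact (mul_eq_right₀ ha).mp har
  have hhalf : (2 * j + 1) ^ 2 / 2 = 2 * j * (j + 1) := by
    rw [show (2 * j + 1) ^ 2 = 2 * (2 * j * (j + 1)) + 1 by ring]
    omega
  rw [isSquare_iff hchar ha, hF, hhalf, pow_mul, hunit, one_pow]

end FiniteField

theorem line_meets_conics_once_general (p n r q : ℕ) (hp : p.Prime) (hodd : Odd p)
    (hr : r = p ^ n) (hq : q = r ^ 2)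
    (F : Type*) [Field F] [Fintype F] (hF : Fintype.card F = q)
    (θ : F) (hθ : ¬ ∃ x : F, x ^ 2 = θ) (y : F) :
    ((1 + θ * y ^ 2) ^ r = 1 + θ * y ^ 2 ∧ 1 + θ * y ^ 2 ≠ 0) ↔ y = 0 := by
  refine ⟨fun ⟨hfixed, _⟩ => ?_, by rintro rfl; simp⟩
  by_contra hy
  have := Fact.mk hp
  have : CharP F p := charP_of_card_eq_prime_pow (f := 2 * n) <| by
    rw [hF, hq, hr, ← pow_mul, mul_comm]
  have hθ0 : θ ≠ 0 := by
    rintro rfl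
    exact hθ ⟨0, zero_pow two_ne_zero⟩
  have hy2 : y ^ 2 ≠ 0 := pow_ne_zero 2 hy
  have hfix : (θ * y ^ 2) ^ r = θ * y ^ 2 := by
    rw [hr, add_pow_char_pow, one_pow, ← hr] at hfixed
    exact add_left_cancel hfixed
  have hsq : IsSquare (θ * y ^ 2) :=
    FiniteField.isSquare_of_pow_eq_self (hr ▸ hodd.pow) (hq ▸ hF) (mul_ne_zero hθ0 hy2) hfix
  obtain ⟨x, hx⟩ := hsq.div (IsSquare.sq y)
  exact hθ ⟨x, by rw [sq, ← hx, mul_div_cancel_right₀ _ hy2]⟩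

/-- Let `q = r²` with `r` an odd prime power, let `F` be the field with `q` elements,
and let `θ ∈ F` be a non-square.  Then `1 + θ·y²` is a nonzero element of the
subfield of order `r` (i.e. `(1 + θy²)^r = 1 + θy²` and `1 + θy² ≠ 0`) if and only
if `y = 0`.  (Geometrically: the line `x = 1` of `AG(2,q)` meets the union of the
conics `x² + θy² = α`, `α ∈ F_r^*`, in exactly one point, so `w₀ = 1`.) -/
theorem line_meets_conics_once (p n r q : ℕ) (hp : p.Prime) (hodd : Odd p)
    (hn : 1 ≤ n) (hr : r = p ^ n) (hq : q = r ^ 2)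
    (F : Type*) [Field F] [Fintype F] (hF : Fintype.card F = q)
    (θ : F) (hθ : ¬ ∃ x : F, x ^ 2 = θ) (y : F) :
    ((1 + θ * y ^ 2) ^ r = 1 + θ * y ^ 2 ∧ 1 + θ * y ^ 2 ≠ 0) ↔ y = 0 :=
  line_meets_conics_once_general p n r q hp hodd hr hq F hF θ hθ y
end

section
/- Let r be an odd prime power, let q = r², let F_q be the finite field with q elements, and let μ be a generator of the multiplicative group F_qˣ. For an integer j, let N_j be the number of elements α ∈ F_r^* = {α ∈ F_q : α^r = α, α ≠ 0} such that μ^j·α − 1 is a non-square in F_q. Then for every integer j with 1 ≤ j ≤ r: N_j = (r−1)/2 if j is odd, and N_j = (r+1)/2 if j is even. -/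
/-!
Write `K = 𝔽_r ⊆ F = 𝔽_q` and `A = μ ^ j`. By Euler's criterion `y ^ ((q - 1) / 2)` equals
`(y ^ (r + 1)) ^ ((r - 1) / 2)`, so `y ∈ Fˣ` is a square in `F` iff its norm `y ^ (r + 1)` is a
square in `K`. For `a ∈ K` the norm of `A * a - 1` is the quadratic `N(A) a² - T(A) a + 1`, whose
discriminant `(A - A ^ r) ^ 2` is a non-square in `K` as soon as `A ∉ K`, which `1 ≤ j ≤ r`
guarantees. Completing the square reduces the count to the values of the quadratic character on
`x ^ 2 - D` for a non-square `D`; since the conic `x ^ 2 - y ^ 2 = D` has `r - 1` points, exactly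
`(r - 1) / 2` of these are squares. Finally `N(μ)` is a non-square, so the answer depends on the
parity of `j`.
-/

open Finset

theorem sq_sub_ne_zero_of_not_isSquare {R : Type*} [Ring R] {D : R} (hD : ¬IsSquare D) (x : R) :
    x ^ 2 - D ≠ 0 :=
  fun h ↦ hD ⟨x, by rw [← sq, ← sub_eq_zero.mp h]⟩

section OddCharacteristic

variable {K : Type*} [Field K] [Fintype K] [DecidableEq K]

theorem card_sq_sub_sq_eq (hK : ringChar K ≠ 2) {D : K} (hD : D ≠ 0) :
    #{p : K × K | p.1 ^ 2 - p.2 ^ 2 = D} = Fintype.card K - 1 := by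
  have h2 : (2 : K) ≠ 0 := Ring.two_ne_zero hK
  have hsum : ∀ x y : K, x ^ 2 - y ^ 2 = D → x + y ≠ 0 := fun x y h h0 ↦
    hD (by rw [← h, eq_neg_of_add_eq_zero_left h0]; ring)
  rw [← card_univ, ← card_erase_of_mem (mem_univ 0)]
  refine card_nbij' (fun p ↦ p.1 + p.2) (fun u ↦ ((u + D / u) / 2, (u - D / u) / 2))
    ?_ ?_ ?_ ?_
  · rintro ⟨x, y⟩ h
    simpa using hsum x y (by simpa using h)
  · intro u hu
    replace hu : u ≠ 0 := by simpa using hu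
    suffices ((u + D / u) / 2) ^ 2 - ((u - D / u) / 2) ^ 2 = D by simpa using this
    field_simp
    ring
  · rintro ⟨x, y⟩ h
    replace h : x ^ 2 - y ^ 2 = D := by simpa using h
    have hdiv : D / (x + y) = x - y := by
      rw [div_eq_iff (hsum x y h), ← h]; ring
    simp only [hdiv, Prod.mk.injEq]
    constructor <;> field_simp <;> ring
  · intro u hu
    replace hu : u ≠ 0 := by simpa using hu
    field_simp
    ring

theorem card_sq_eq_of_ne_zero (hK : ringChar K ≠ 2) {a : K} (ha : a ≠ 0) :
    #{y : K | y ^ 2 = a} = if quadraticChar K a = 1 then 2 else 0 := by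
  have h := quadraticChar_card_sqrts hK a
  rw [Set.toFinset_ofPred] at h
  rcases quadraticChar_dichotomy ha with h1 | h1 <;> rw [h1] at h
  · rw [if_pos h1]; omega
  · rw [if_neg (by rw [h1]; decide)]; omega

theorem card_quadraticChar_sq_sub_eq_one (hK : ringChar K ≠ 2) {D : K}
    (hD : ¬IsSquare D) :
    #{x : K | quadraticChar K (x ^ 2 - D) = 1} = (Fintype.card K - 1) / 2 := by
  suffices 2 * #{x : K | quadraticChar K (x ^ 2 - D) = 1} = Fintype.card K - 1 by omega
  have hne := sq_sub_ne_zero_of_not_isSquare hD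
  calc 2 * #{x : K | quadraticChar K (x ^ 2 - D) = 1}
      = ∑ x : K, #{y : K | y ^ 2 = x ^ 2 - D} := by
        rw [card_filter, mul_sum]
        refine sum_congr rfl fun x _ ↦ ?_
        rw [card_sq_eq_of_ne_zero hK (hne x)]
        split_ifs <;> rfl
    _ = #{p : K × K | p.2 ^ 2 = p.1 ^ 2 - D} := by
        simp only [card_filter]
        exact (Fintype.sum_prod_type fun p : K × K ↦ if p.2 ^ 2 = p.1 ^ 2 - D then 1 else 0).symm
    _ = #{p : K × K | p.1 ^ 2 - p.2 ^ 2 = D} := by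
        congr 1
        refine filter_congr fun p _ ↦ ?_
        constructor <;> intro h <;> linear_combination -h
    _ = Fintype.card K - 1 := card_sq_sub_sq_eq hK fun h ↦ hD (h ▸ IsSquare.zero)

theorem card_quadraticChar_sq_sub_eq_neg_one (hK : ringChar K ≠ 2) {D : K}
    (hD : ¬IsSquare D) :
    #{x : K | quadraticChar K (x ^ 2 - D) = -1} = (Fintype.card K + 1) / 2 := by
  have hsplit := card_filter_add_card_filter_not (s := univ)
    (fun x : K ↦ quadraticChar K (x ^ 2 - D) = 1)
  have hne := sq_sub_ne_zero_of_not_isSquare hD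
  rw [filter_congr fun x _ ↦ (quadraticChar_eq_neg_one_iff_not_one (hne x)).symm,
    card_quadraticChar_sq_sub_eq_one hK hD, card_univ] at hsplit
  have := FiniteField.odd_card_of_char_ne_two hK
  omega

theorem quadraticChar_quadratic_eq_mul (hK : ringChar K ≠ 2) {a : K} (ha : a ≠ 0) (b c x : K) :
    quadraticChar K (a * x ^ 2 + b * x + c) =
      quadraticChar K a * quadraticChar K ((2 * a * x + b) ^ 2 - discrim a b c) := by
  have h4 : quadraticChar K (4 * a) = quadraticChar K a := by
    rw [map_mul, show (4 : K) = 2 ^ 2 by norm_num,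
      quadraticChar_sq_one' (Ring.two_ne_zero hK), one_mul]
  have hsq : 4 * a * (a * x ^ 2 + b * x + c) = (2 * a * x + b) ^ 2 - discrim a b c := by
    rw [discrim]; ring
  rw [← hsq, map_mul, h4, ← mul_assoc, ← sq, quadraticChar_sq_one ha, one_mul]

theorem card_quadraticChar_quadratic_eq_neg_one (hK : ringChar K ≠ 2) {a b c : K} (ha : a ≠ 0)
    (hd : ¬IsSquare (discrim a b c)) :
    #{x : K | quadraticChar K (a * x ^ 2 + b * x + c) = -1} =
      if quadraticChar K a = 1 then (Fintype.card K + 1) / 2 else (Fintype.card K - 1) / 2 := by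
  have h2a : 2 * a ≠ 0 := mul_ne_zero (Ring.two_ne_zero hK) ha
  let e : K ≃ K := (Equiv.mulLeft₀ (2 * a) h2a).trans (Equiv.addRight b)
  have hcount : #{x : K | quadraticChar K (a * x ^ 2 + b * x + c) = -1} =
      #{y : K | quadraticChar K a * quadraticChar K (y ^ 2 - discrim a b c) = -1} := by
    simp only [card_filter, quadraticChar_quadratic_eq_mul hK ha]
    exact e.sum_comp fun y ↦
      if quadraticChar K a * quadraticChar K (y ^ 2 - discrim a b c) = -1 then 1 else 0
  rw [hcount]
  rcases quadraticChar_dichotomy ha with h | h <;> simp only [h, one_mul, neg_one_mul, neg_inj]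
  · exact card_quadraticChar_sq_sub_eq_neg_one hK hd
  · exact card_quadraticChar_sq_sub_eq_one hK hd

end OddCharacteristic

section QuadraticExtension

variable {K F : Type*} [Field K] [Field F] [Fintype K] [Fintype F] [Algebra K F]

theorem algebraMap_norm_eq_mul_pow_card (h2 : Module.finrank K F = 2) (x : F) :
    algebraMap K F (Algebra.norm K x) = x * x ^ Fintype.card K := by
  rw [FiniteField.algebraMap_norm_eq_prod_pow, h2, prod_range_succ, prod_range_one,
    Nat.card_eq_fintype_card, pow_zero, pow_one, pow_one]

theorem algebraMap_trace_eq_add_pow_card (h2 : Module.finrank K F = 2) (x : F) :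
    algebraMap K F (Algebra.trace K F x) = x + x ^ Fintype.card K := by
  rw [FiniteField.algebraMap_trace_eq_sum_pow, h2, sum_range_succ, sum_range_one,
    Nat.card_eq_fintype_card, pow_zero, pow_one, pow_one]

theorem card_eq_card_sq_of_finrank_eq_two (h2 : Module.finrank K F = 2) :
    Fintype.card F = Fintype.card K ^ 2 :=
  h2 ▸ Module.card_eq_pow_finrank

theorem finrank_eq_two_of_card_eq_card_sq (h : Fintype.card F = Fintype.card K ^ 2) :
    Module.finrank K F = 2 :=
  Nat.pow_right_injective Fintype.one_lt_card (Module.card_eq_pow_finrank.symm.trans h)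

theorem norm_mul_algebraMap_sub_one (h2 : Module.finrank K F = 2) (A : F) (a : K) :
    Algebra.norm K (A * algebraMap K F a - 1) =
      Algebra.norm K A * a ^ 2 + -Algebra.trace K F A * a + 1 := by
  have hφ : (A * algebraMap K F a - 1) ^ Fintype.card K =
      A ^ Fintype.card K * algebraMap K F a - 1 := by
    change FiniteField.frobeniusAlgHom K F _ = _
    rw [map_sub, map_mul, AlgHom.commutes, map_one]
    rfl
  apply (algebraMap K F).injective
  simp only [map_add, map_mul, map_neg, map_pow, map_one, algebraMap_norm_eq_mul_pow_card h2,
    algebraMap_trace_eq_add_pow_card h2, hφ]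
  ring

theorem not_isSquare_discrim_norm_trace (hK : ringChar K ≠ 2) (h2 : Module.finrank K F = 2)
    {A : F} (hA : A ^ Fintype.card K ≠ A) :
    ¬IsSquare (discrim (Algebra.norm K A) (-Algebra.trace K F A) 1) := by
  -- a square root of the discriminant would be `±(A - A ^ q)`, which the Frobenius negates
  rintro ⟨s, hs⟩
  set φ := FiniteField.frobeniusAlgHom K F
  set δ := A - φ A
  have hφφ : φ (φ A) = A := by
    change (A ^ Fintype.card K) ^ Fintype.card K = A
    rw [← pow_mul, ← sq, ← card_eq_card_sq_of_finrank_eq_two h2, FiniteField.pow_card]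
  have hφδ : φ δ = -δ := by rw [map_sub, hφφ, neg_sub]
  have hsq : algebraMap K F s ^ 2 = δ ^ 2 := by
    rw [sq, ← map_mul, ← hs, discrim]
    simp only [map_sub, map_mul, map_pow, map_neg, map_one, map_ofNat,
      algebraMap_norm_eq_mul_pow_card h2, algebraMap_trace_eq_add_pow_card h2]
    change _ = (A - A ^ Fintype.card K) ^ 2
    ring
  have hfix : φ (algebraMap K F s) = algebraMap K F s := φ.commutes s
  have hδ : -δ = δ := by
    rcases sq_eq_sq_iff_eq_or_eq_neg.mp hsq with h | h
    · rwa [h, hφδ] at hfix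
    · rw [h, map_neg, hφδ, neg_neg] at hfix
      exact hfix.symm
  have hF : ringChar F ≠ 2 := Algebra.ringChar_eq K F ▸ hK
  exact hA (sub_eq_zero.mp ((Ring.eq_self_iff_eq_zero_of_char_ne_two hF).mp hδ)).symm

variable [DecidableEq K] [DecidableEq F]

theorem quadraticChar_norm (hK : ringChar K ≠ 2) (h2 : Module.finrank K F = 2) (y : F) :
    quadraticChar K (Algebra.norm K y) = quadraticChar F y := by
  have hF : ringChar F ≠ 2 := Algebra.ringChar_eq K F ▸ hK
  refine (quadraticChar_isQuadratic K).eq_of_eq_coe (quadraticChar_isQuadratic F) hF ?_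
  obtain ⟨m, hm⟩ : ∃ m, Fintype.card K = 2 * m + 1 :=
    ⟨_, (Nat.div_add_mod _ 2).symm.trans (by rw [FiniteField.odd_card_of_char_ne_two hK])⟩
  have hexp : (Fintype.card K + 1) * (Fintype.card K / 2) = Fintype.card K ^ 2 / 2 := by
    have hsq : (2 * m + 1) ^ 2 = 2 * ((2 * m + 1 + 1) * m) + 1 := by ring
    rw [hm, show (2 * m + 1) / 2 = m by omega, hsq]
    omega
  rw [quadraticChar_eq_pow_of_char_ne_two' hF, ← map_intCast (algebraMap K F),
    quadraticChar_eq_pow_of_char_ne_two' hK, map_pow, algebraMap_norm_eq_mul_pow_card h2,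
    ← pow_succ', ← pow_mul, hexp, card_eq_card_sq_of_finrank_eq_two h2]

theorem card_quadraticChar_mul_algebraMap_sub_one_eq_neg_one (hK : ringChar K ≠ 2)
    (h2 : Module.finrank K F = 2) {A : F} (hA : A ^ Fintype.card K ≠ A) :
    #{a : K | quadraticChar F (A * algebraMap K F a - 1) = -1} =
      if quadraticChar K (Algebra.norm K A) = 1 then (Fintype.card K + 1) / 2
      else (Fintype.card K - 1) / 2 := by
  have hA0 : A ≠ 0 := by rintro rfl; exact hA (zero_pow Fintype.card_ne_zero)
  have hN : Algebra.norm K A ≠ 0 := fun h ↦ by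
    simpa [hA0, algebraMap_norm_eq_mul_pow_card h2] using congrArg (algebraMap K F) h
  simp only [← quadraticChar_norm hK h2, norm_mul_algebraMap_sub_one h2]
  exact card_quadraticChar_quadratic_eq_neg_one hK hN (not_isSquare_discrim_norm_trace hK h2 hA)

end QuadraticExtension

def iterateFrobeniusFixedField (F : Type*) [Field F] (p n : ℕ) [ExpChar F p] : Subfield F :=
  (iterateFrobenius F p n).eqLocusField (RingHom.id F)

theorem mem_iterateFrobeniusFixedField {F : Type*} [Field F] {p n : ℕ} [ExpChar F p] {x : F} :
    x ∈ iterateFrobeniusFixedField F p n ↔ x ^ p ^ n = x := by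
  rw [iterateFrobeniusFixedField, RingHom.mem_eqLocusField, iterateFrobenius_def, RingHom.id_apply]

theorem pow_pow_ne_self_of_orderOf_eq {G : Type*} [Monoid G] {μ : G} {r j : ℕ}
    (hμ : orderOf μ = (r + 1) * (r - 1)) (hr : 2 ≤ r) (hj1 : 1 ≤ j) (hjr : j ≤ r) :
    (μ ^ j) ^ r ≠ μ ^ j := by
  intro h
  have hfin : IsOfFinOrder μ :=
    orderOf_pos_iff.mp (by rw [hμ]; exact Nat.mul_pos (by omega) (by omega))
  rw [← pow_mul, hfin.pow_eq_pow_iff_modEq, hμ, Nat.ModEq.comm,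
    Nat.modEq_iff_dvd' (Nat.le_mul_of_pos_right j (by omega)),
    show j * r - j = j * (r - 1) by rw [Nat.mul_sub, mul_one]] at h
  have := Nat.le_of_dvd (by omega) (Nat.dvd_of_mul_dvd_mul_right (by omega) h)
  omega

section Generator

variable {F : Type*} [Field F] [Fintype F]

theorem card_pow_eq_self_of_isPrimitiveRoot [DecidableEq F] {r : ℕ} (hr : 2 ≤ r) {ζ : F}
    (hζ : IsPrimitiveRoot ζ (r - 1)) :
    #{x : F | x ^ r = x} = r := by
  have hsplit : ({x : F | x ^ r = x} : Finset F) =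
      insert 0 (Polynomial.nthRootsFinset (r - 1) (1 : F)) := by
    ext x
    rw [mem_filter_univ, mem_insert, Polynomial.mem_nthRootsFinset (by omega),
      or_comm, ← mul_left_eq_self₀, ← pow_succ, Nat.sub_add_cancel (by omega)]
  rw [hsplit, card_insert_of_notMem, hζ.card_nthRootsFinset]
  · omega
  · rw [Polynomial.mem_nthRootsFinset (by omega), zero_pow (by omega)]
    exact zero_ne_one

theorem Subfield.card_eq_of_mem_iff_pow_eq_self {K : Subfield F} [Fintype K] {r : ℕ}
    (hr : 2 ≤ r) (hK : ∀ x, x ∈ K ↔ x ^ r = x) {μ : F}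
    (hμ : orderOf μ = (r + 1) * (r - 1)) :
    Fintype.card K = r := by
  classical
  have hζ : IsPrimitiveRoot (μ ^ (r + 1)) (r - 1) := by
    have := (IsPrimitiveRoot.orderOf μ).pow_of_dvd (p := r + 1) (by omega)
      (by rw [hμ]; exact dvd_mul_right _ _)
    rwa [hμ, Nat.mul_div_cancel_left _ (by omega)] at this
  rw [Fintype.card_of_subtype _ fun x ↦ (mem_filter_univ x).trans (hK x).symm]
  exact card_pow_eq_self_of_isPrimitiveRoot hr hζ

theorem quadraticChar_eq_neg_one_of_orderOf_eq [DecidableEq F] (hF : ringChar F ≠ 2) {μ : F}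
    (hμ : orderOf μ = Fintype.card F - 1) :
    quadraticChar F μ = -1 := by
  have hodd := FiniteField.odd_card_of_char_ne_two hF
  have hcard : 2 < Fintype.card F := by
    have := Fintype.one_lt_card (α := F); omega
  have hμ0 : μ ≠ 0 := by
    rintro rfl
    rw [orderOf_eq_zero_iff'.mpr fun n hn ↦ by simp [zero_pow hn.ne']] at hμ
    omega
  rw [quadraticChar_eq_pow_of_char_ne_two hF hμ0, if_neg]
  intro h
  have := orderOf_le_of_pow_eq_one (by omega) h
  omega

end Generator

theorem isSquare_neg_one_of_card_eq_sq {F : Type*} [Field F] [Fintype F] {r : ℕ} (hr : Odd r)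
    (hF : Fintype.card F = r ^ 2) :
    IsSquare (-1 : F) := by
  rw [FiniteField.isSquare_neg_one_iff, hF]
  obtain ⟨m, rfl⟩ := hr
  ring_nf
  omega

theorem ncard_setOf_not_exists_sq_eq {F : Type*} [Field F] [Fintype F] [DecidableEq F]
    {K : Subfield F} [Fintype K] {r : ℕ} (hK : ∀ x, x ∈ K ↔ x ^ r = x)
    (hneg : IsSquare (-1 : F)) (A : F) :
    {α : F | α ^ r = α ∧ α ≠ 0 ∧ ¬ ∃ x : F, x ^ 2 = A * α - 1}.ncard =
      #{a : K | quadraticChar F (A * algebraMap K F a - 1) = -1} := by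
  have hset : {α : F | α ^ r = α ∧ α ≠ 0 ∧ ¬ ∃ x : F, x ^ 2 = A * α - 1} =
      Subtype.val '' {a : K | quadraticChar F (A * algebraMap K F a - 1) = -1} := by
    ext α
    simp only [Set.mem_ofPred_eq, Set.mem_image, quadraticChar_neg_one_iff_not_isSquare,
      isSquare_iff_exists_sq, eq_comm (a := A * _ - 1)]
    constructor
    · rintro ⟨hα, -, hns⟩
      exact ⟨⟨α, (hK α).mpr hα⟩, hns, rfl⟩
    · rintro ⟨a, hns, rfl⟩
      refine ⟨(hK a).mp a.2, fun h0 ↦ ?_, hns⟩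
      obtain ⟨x, hx⟩ := hneg
      refine hns ⟨x, ?_⟩
      change x ^ 2 = A * (a : F) - 1
      rw [h0, mul_zero, zero_sub, hx, sq]
  rw [hset, Set.ncard_image_of_injective _ Subtype.val_injective, Set.ncard_eq_toFinset_card',
    Set.toFinset_ofPred]

/-- Let `q = r²` with `r` an odd prime power, let `F` be the field with `q` elements,
and let `μ` be a generator of the multiplicative group `Fˣ` (an element of
multiplicative order `q - 1`).  For `1 ≤ j ≤ r`, the number `N_j` of nonzero
elements `α` of the subfield of order `r` (i.e. `α^r = α`, `α ≠ 0`) such that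
`μ^j·α - 1` is a non-square in `F` equals `(r-1)/2` if `j` is odd and `(r+1)/2`
if `j` is even. -/
theorem count_nonsquares_Nj (p n r q : ℕ) (hp : p.Prime) (hodd : Odd p)
    (hn : 1 ≤ n) (hr : r = p ^ n) (hq : q = r ^ 2)
    (F : Type*) [Field F] [Fintype F] (hF : Fintype.card F = q)
    (μ : F) (hμ : orderOf μ = q - 1)
    (j : ℕ) (hj1 : 1 ≤ j) (hjr : j ≤ r) :
    {α : F | α ^ r = α ∧ α ≠ 0 ∧ ¬ ∃ x : F, x ^ 2 = μ ^ j * α - 1}.ncard =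
      if Odd j then (r - 1) / 2 else (r + 1) / 2 := by
  classical
  have : Fact p.Prime := ⟨hp⟩
  have : CharP F p :=
    charP_of_card_eq_prime_pow (f := 2 * n) (by rw [hF, hq, hr, ← pow_mul, mul_comm])
  have hp2 : p ≠ 2 := hodd.ne_two_of_dvd_nat dvd_rfl
  have hF2 : ringChar F ≠ 2 := by rwa [ringChar.eq F p]
  have hp3 : 3 ≤ p := by have := hp.two_le; omega
  have hr3 : 3 ≤ r := hr ▸ hp3.trans (Nat.le_self_pow (by omega) p)
  have hμ' : orderOf μ = (r + 1) * (r - 1) := by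
    rw [hμ, hq, ← Nat.pow_two_sub_pow_two, one_pow]
  let K := iterateFrobeniusFixedField F p n
  have hK : ∀ x, x ∈ K ↔ x ^ r = x := fun x ↦ hr ▸ mem_iterateFrobeniusFixedField
  have hcardK : Fintype.card K = r := Subfield.card_eq_of_mem_iff_pow_eq_self (by omega) hK hμ'
  have h2 : Module.finrank K F = 2 := finrank_eq_two_of_card_eq_card_sq (by rw [hF, hq, hcardK])
  have hK2 : ringChar K ≠ 2 := Algebra.ringChar_eq K F ▸ hF2
  have hnorm : quadraticChar K (Algebra.norm K (μ ^ j)) = (-1) ^ j := by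
    rw [map_pow, map_pow, quadraticChar_norm hK2 h2,
      quadraticChar_eq_neg_one_of_orderOf_eq hF2 (by rw [hμ, hF])]
  have hA : (μ ^ j) ^ Fintype.card K ≠ μ ^ j :=
    hcardK ▸ pow_pow_ne_self_of_orderOf_eq hμ' (by omega) hj1 hjr
  have hneg : IsSquare (-1 : F) := isSquare_neg_one_of_card_eq_sq (hr ▸ hodd.pow) (hF.trans hq)
  rw [ncard_setOf_not_exists_sq_eq hK hneg,
    card_quadraticChar_mul_algebraMap_sub_one_eq_neg_one hK2 h2 hA, hnorm, hcardK]
  rcases Nat.even_or_odd j with he | ho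
  · simp [he.neg_one_pow, Nat.not_odd_iff_even.mpr he]
  · simp [ho.neg_one_pow, ho]
end

section
/- Let r be an odd prime power, let q = r², let F_q be the finite field with q elements, and let μ be a generator of the multiplicative group F_qˣ. For β ∈ F_r = {α ∈ F_q : α^r = α} one has 1 − μβ ≠ 0; let M_β be the number of elements α ∈ F_r^* = {α ∈ F_q : α^r = α, α ≠ 0} such that (μ/(1 − μβ))·α − 1 is a non-square in F_q, and set A = M_0. Then M_β = A if 1 − μβ is a square in F_q, and M_β = r − A if 1 − μβ is a non-square in F_q. -/
/-! Let `K = {α | α ^ r = α}`, the subfield of order `r`, and `χ` the quadratic character of `F`.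
Since `q` is a square, `q % 4 ≠ 3` and `χ (-1) = 1`; since `μ` has order `q - 1 > r - 1`, `μ ∉ K`,
so `μ t ≠ 1` for `t ∈ K`. With `γ = 1 - μβ` one has `(μ / γ) α - 1 = (μ (α + β) - 1) / γ`, so the
translation `t = α + β` of `K` identifies `M_β` with the number of `t ∈ K` with
`χ (μ t - 1) = -χ γ`; the point `α = 0` drops out because `χ (μ β - 1) = χ (-γ) = χ γ`.
For `χ γ = 1` this is `A`; for `χ γ = -1` it is the complement in `K` of the set counted by `A`. -/

open scoped Classical
open Polynomial

theorem Polynomial.X_pow_sub_X_dvd_X_pow_pow_sub_X {R : Type*} [CommRing R] (r m : ℕ) :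
    (X ^ r - X : R[X]) ∣ X ^ r ^ m - X := by
  induction m with
  | zero => simp
  | succ m ih =>
    have hdecomp : (X ^ r ^ (m + 1) - X : R[X]) =
        ((X ^ r) ^ r ^ m - X ^ r ^ m) + (X ^ r ^ m - X) := by
      rw [← pow_mul, ← pow_succ']; ring
    rw [hdecomp]
    exact dvd_add (sub_dvd_pow_sub_pow _ _ _) ih

theorem pow_ne_self_of_orderOf_eq_sq_sub_one {G₀ : Type*} [GroupWithZero G₀] {μ : G₀} {r : ℕ}
    (hr : 1 < r) (h : orderOf μ = r ^ 2 - 1) : μ ^ r ≠ μ := by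
  have hr2 : r < r ^ 2 := by nlinarith
  have hμ : μ ≠ 0 := by
    rintro rfl
    have h0 := pow_orderOf_eq_one (0 : G₀)
    rw [h, zero_pow (by omega)] at h0
    exact zero_ne_one h0
  intro hμr
  have hpow : μ ^ (r - 1) = 1 := by rw [pow_sub₀ _ hμ hr.le, hμr, pow_one, mul_inv_cancel₀ hμ]
  have := Nat.le_of_dvd (by omega) (h ▸ orderOf_dvd_of_pow_eq_one hpow)
  omega

theorem Subfield.mul_ne_one_of_notMem_of_mem {F : Type*} [Field F] {K : Subfield F} {μ t : F}
    (hμ : μ ∉ K) (ht : t ∈ K) : μ * t ≠ 1 := fun h =>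
  hμ (eq_inv_of_mul_eq_one_left h ▸ K.inv_mem ht)

theorem exists_sq_eq_iff_isSquare {α : Type*} [Monoid α] {a : α} :
    (∃ x, x ^ 2 = a) ↔ IsSquare a := by
  simp only [isSquare_iff_exists_sq, eq_comm]

namespace FiniteField

variable {F : Type*} [Field F] [Fintype F]

theorem card_roots_toFinset_of_dvd_X_pow_card_sub_X {f : F[X]}
    (hf : f ∣ X ^ Fintype.card F - X) : f.roots.toFinset.card = f.natDegree := by
  have hne : (X ^ Fintype.card F - X : F[X]) ≠ 0 :=
    X_pow_card_sub_X_ne_zero F Fintype.one_lt_card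
  have hsplit : (X ^ Fintype.card F - X : F[X]).Splits := by
    rw [splits_iff_card_roots, roots_X_pow_card_sub_X,
      X_pow_card_sub_X_natDegree_eq F Fintype.one_lt_card]
    rfl
  have hnodup : f.roots.Nodup := Multiset.nodup_of_le (roots.le_of_dvd hne hf)
    (roots_X_pow_card_sub_X F ▸ Finset.univ.nodup)
  rw [Multiset.toFinset_card_of_nodup hnodup, (hsplit.of_dvd hne hf).natDegree_eq_card_roots]

theorem ncard_setOf_pow_eq_self {r m : ℕ} (hr : 1 < r) (hF : Fintype.card F = r ^ m) :
    {α : F | α ^ r = α}.ncard = r := by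
  have hset : {α : F | α ^ r = α} = (X ^ r - X : F[X]).roots.toFinset := by
    ext α
    simp [mem_roots (X_pow_card_sub_X_ne_zero F hr), sub_eq_zero]
  rw [hset, Set.ncard_coe_finset, card_roots_toFinset_of_dvd_X_pow_card_sub_X
    (hF ▸ X_pow_sub_X_dvd_X_pow_pow_sub_X r m), X_pow_card_sub_X_natDegree_eq F hr]

theorem exists_subfield_mem_iff_pow_eq_self {r : ℕ} (hr : r ∣ Fintype.card F) :
    ∃ K : Subfield F, ∀ α, α ∈ K ↔ α ^ r = α := by
  obtain ⟨n, hp, hcard⟩ := FiniteField.card F (ringChar F)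
  obtain ⟨k, -, rfl⟩ := (Nat.dvd_prime_pow hp).1 (hcard ▸ hr)
  have : Fact (ringChar F).Prime := ⟨hp⟩
  exact ⟨(iterateFrobenius F (ringChar F) k).eqLocusField (RingHom.id F), fun _ => Iff.rfl⟩

theorem isSquare_neg_one_of_card_eq_sq {r : ℕ} (hF : Fintype.card F = r ^ 2) :
    IsSquare (-1 : F) := by
  rw [isSquare_neg_one_iff, hF, Nat.pow_mod]
  have := Nat.mod_lt r (show 4 > 0 by norm_num)
  interval_cases r % 4 <;> norm_num

end FiniteField

section QuadraticChar

variable {F : Type*} [Field F] [Fintype F]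

theorem quadraticChar_div (a b : F) :
    quadraticChar F (a / b) = quadraticChar F a * quadraticChar F b := by
  rw [div_eq_mul_inv, map_mul, ← MulChar.inv_apply', (quadraticChar_isQuadratic F).inv]

variable (K : Subfield F) {μ β : F}

theorem Subfield.ncard_quadraticChar_div_eq_ncard_translate (hμ : μ ∉ K) (hβ : β ∈ K)
    (hneg : quadraticChar F (-1) = 1) :
    {α | α ∈ K ∧ α ≠ 0 ∧ quadraticChar F ((μ / (1 - μ * β)) * α - 1) = -1}.ncard =
      {t | t ∈ K ∧ quadraticChar F (μ * t - 1) = -quadraticChar F (1 - μ * β)}.ncard := by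
  set γ := 1 - μ * β
  set c := quadraticChar F γ
  have hγ : γ ≠ 0 := sub_ne_zero.2 (K.mul_ne_one_of_notMem_of_mem hμ hβ).symm
  have hc : c * c = 1 := by rw [← sq]; exact quadraticChar_sq_one hγ
  have hβc : quadraticChar F (μ * (0 + β) - 1) = c := by
    rw [show μ * (0 + β) - 1 = -1 * γ by ring, map_mul, hneg, one_mul]
  conv_rhs => rw [← Set.ncard_preimage_of_injective_subset_range (add_left_injective β)
    fun t _ => ⟨t - β, sub_add_cancel t β⟩]
  congr 1
  ext α
  simp only [Set.mem_ofPred_eq, Set.mem_preimage, add_mem_cancel_right hβ]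
  refine and_congr_right fun _ => ?_
  rw [show μ / γ * α - 1 = (μ * (α + β) - 1) / γ by field_simp; ring, quadraticChar_div]
  constructor
  · rintro ⟨-, h⟩
    linear_combination c * h - quadraticChar F (μ * (α + β) - 1) * hc
  · intro h
    refine ⟨?_, by rw [h]; linear_combination -hc⟩
    rintro rfl
    have : c = 0 := by linarith
    simp [this] at hc

theorem Subfield.ncard_quadraticChar_eq_one (hμ : μ ∉ K) :
    {t | t ∈ K ∧ quadraticChar F (μ * t - 1) = 1}.ncard =
      (K : Set F).ncard - {t | t ∈ K ∧ quadraticChar F (μ * t - 1) = -1}.ncard := by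
  rw [← Set.ncard_sdiff fun t ht => ht.1]
  congr 1
  ext t
  simp only [Set.mem_ofPred_eq, Set.mem_sdiff, SetLike.mem_coe, not_and]
  refine and_congr_right fun ht => ?_
  have hne : μ * t - 1 ≠ 0 := sub_ne_zero.2 (K.mul_ne_one_of_notMem_of_mem hμ ht)
  rcases quadraticChar_dichotomy hne with h | h <;> simp [h, ht]

end QuadraticChar

theorem count_nonsquares_Mbeta_general (r q : ℕ) (hq : q = r ^ 2)
    (F : Type*) [Field F] [Fintype F] (hF : Fintype.card F = q)
    (μ : F) (hμ : orderOf μ = q - 1)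
    (β : F) (hβ : β ^ r = β) :
    1 - μ * β ≠ 0 ∧
    ({α : F | α ^ r = α ∧ α ≠ 0 ∧
        ¬ ∃ x : F, x ^ 2 = (μ / (1 - μ * β)) * α - 1}.ncard =
      if ∃ x : F, x ^ 2 = 1 - μ * β then
        {α : F | α ^ r = α ∧ α ≠ 0 ∧ ¬ ∃ x : F, x ^ 2 = μ * α - 1}.ncard
      else
        r - {α : F | α ^ r = α ∧ α ≠ 0 ∧ ¬ ∃ x : F, x ^ 2 = μ * α - 1}.ncard) := by
  subst hq
  have hr1 : 1 < r := (one_lt_pow_iff two_ne_zero).1 (hF ▸ Fintype.one_lt_card)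
  obtain ⟨K, hK⟩ :=
    FiniteField.exists_subfield_mem_iff_pow_eq_self (hF ▸ dvd_pow_self r two_ne_zero)
  have hμK : μ ∉ K := by rw [hK]; exact pow_ne_self_of_orderOf_eq_sq_sub_one hr1 hμ
  have hβK : β ∈ K := (hK β).2 hβ
  have hγ : 1 - μ * β ≠ 0 := sub_ne_zero.2 (K.mul_ne_one_of_notMem_of_mem hμK hβK).symm
  have hneg : quadraticChar F (-1) = 1 := (quadraticChar_one_iff_isSquare (by norm_num)).2
    (FiniteField.isSquare_neg_one_of_card_eq_sq hF)
  have hA := K.ncard_quadraticChar_div_eq_ncard_translate hμK K.zero_mem hneg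
  simp only [mul_zero, sub_zero, div_one, map_one] at hA
  refine ⟨hγ, ?_⟩
  simp only [← hK, exists_sq_eq_iff_isSquare, ← quadraticChar_neg_one_iff_not_isSquare]
  rw [K.ncard_quadraticChar_div_eq_ncard_translate hμK hβK hneg, hA]
  split_ifs with hsq
  · rw [(quadraticChar_one_iff_isSquare hγ).2 hsq]
  · rw [quadraticChar_neg_one_iff_not_isSquare.2 hsq, neg_neg, K.ncard_quadraticChar_eq_one hμK,
      show (K : Set F) = {α | α ^ r = α} from Set.ext hK,
      FiniteField.ncard_setOf_pow_eq_self hr1 hF]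

/-- Let `q = r²` with `r` an odd prime power, let `F` be the field with `q` elements,
and let `μ` be a generator of the multiplicative group `Fˣ` (an element of
multiplicative order `q - 1`).  For `β` in the subfield of order `r` (i.e.
`β^r = β`) one has `1 - μβ ≠ 0`.  Let `M_β` be the number of nonzero elements `α`
of the subfield of order `r` such that `(μ/(1 - μβ))·α - 1` is a non-square in `F`,
and let `A = M_0`.  Then `M_β = A` if `1 - μβ` is a square in `F`, and
`M_β = r - A` if `1 - μβ` is a non-square in `F`. -/
theorem count_nonsquares_Mbeta (p n r q : ℕ) (hp : p.Prime) (hodd : Odd p)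
    (hn : 1 ≤ n) (hr : r = p ^ n) (hq : q = r ^ 2)
    (F : Type*) [Field F] [Fintype F] (hF : Fintype.card F = q)
    (μ : F) (hμ : orderOf μ = q - 1)
    (β : F) (hβ : β ^ r = β) :
    1 - μ * β ≠ 0 ∧
    ({α : F | α ^ r = α ∧ α ≠ 0 ∧
        ¬ ∃ x : F, x ^ 2 = (μ / (1 - μ * β)) * α - 1}.ncard =
      if ∃ x : F, x ^ 2 = 1 - μ * β then
        {α : F | α ^ r = α ∧ α ≠ 0 ∧ ¬ ∃ x : F, x ^ 2 = μ * α - 1}.ncard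
      else
        r - {α : F | α ^ r = α ∧ α ≠ 0 ∧ ¬ ∃ x : F, x ^ 2 = μ * α - 1}.ncard) :=
  count_nonsquares_Mbeta_general r q hq F hF μ hμ β hβ
end
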